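/- In a quasicomplemented residuated lattice A, for a prime filter P the following are equivalent: (1) P is an α-filter; (2) P contains no dense element; (3) P is a minimal prime filter; (4) for any pair x, y ∈ A with x^⊥⊥ = y^⊥, P contains precisely one of x, y. -/

import Mathlib

/-! By quasicomplementation every `x` has a `y` with `x^⊥⊥ = y^⊥`; then `x ⊔ y = 1` and
`x * y` is dense. Hence a prime filter without dense elements contains exactly one of `x`, `y`,
which makes it an α-filter and minimal. Conversely, a minimal prime `P` cannot contain a dense
`d`: by Zorn, a filter maximal among those disjoint from `{a ⊔ d | a ∉ P}` is a prime filter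
below `P` missing `d`. -/

/-- A (bounded, integral, commutative) residuated lattice. -/
class ResLattice (A : Type*) extends Lattice A, CommMonoid A, OrderBot A where
  himp : A → A → A
  adjunction : ∀ x y z : A, x * y ≤ z ↔ x ≤ himp y z
  le_one : ∀ x : A, x ≤ 1

variable {A : Type*} [ResLattice A]

/-- Coannihilator of a subset: `X^⊥ = {a | a ⊔ x = 1 for all x ∈ X}`. -/
def Coann (X : Set A) : Set A := {a | ∀ x ∈ X, a ⊔ x = 1}

/-- Coannulet of an element: `x^⊥`. -/
def rperp (x : A) : Set A := Coann {x}

/-- The principal filter generated by `x`. -/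
def PFil (x : A) : Set A := {a | ∃ n : ℕ, 0 < n ∧ x ^ n ≤ a}

/-- Filters of a residuated lattice. -/
def IsRLFilter (F : Set A) : Prop :=
  F.Nonempty ∧ (∀ x ∈ F, ∀ y ∈ F, x * y ∈ F) ∧ (∀ x ∈ F, ∀ y : A, x ⊔ y ∈ F)

/-- Prime filters. -/
def IsRLPrime (P : Set A) : Prop :=
  IsRLFilter P ∧ P ≠ Set.univ ∧ ∀ x y : A, x ⊔ y ∈ P → x ∈ P ∨ y ∈ P

/-- Minimal prime filters. -/
def IsRLMinPrime (P : Set A) : Prop :=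
  IsRLPrime P ∧ ∀ Q : Set A, IsRLPrime Q → Q ⊆ P → Q = P

/-- Quasicomplemented residuated lattice. -/
def Quasicomplemented (A : Type*) [ResLattice A] : Prop :=
  ∀ x : A, ∃ y : A, Coann (rperp x) = rperp y

/-- α-filters. -/
def IsAlphaFilter (F : Set A) : Prop :=
  IsRLFilter F ∧ ∀ x ∈ F, Coann (rperp x) ⊆ F

/-- The α-filter generated by a subset. -/
def alphaGen (X : Set A) : Set A := ⋂₀ {G : Set A | IsAlphaFilter G ∧ X ⊆ G}

namespace ResLattice

theorem gc_mul_himp (z : A) : GaloisConnection (· * z) (himp z) :=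
  fun x y => adjunction x z y

instance : IsOrderedMonoid A where
  mul_le_mul_left _ _ h z := (gc_mul_himp z).monotone_l h

theorem sup_mul (x y z : A) : (x ⊔ y) * z = x * z ⊔ y * z :=
  (gc_mul_himp z).l_sup

theorem mul_sup (x y z : A) : z * (x ⊔ y) = z * x ⊔ z * y := by
  simp only [mul_comm z, sup_mul]

theorem sup_one (x : A) : x ⊔ 1 = 1 := sup_eq_right.mpr (le_one x)

theorem mul_le_left (x y : A) : x * y ≤ x := mul_le_of_le_one_right' (le_one y)

theorem mul_le_right (x y : A) : x * y ≤ y := mul_le_of_le_one_left' (le_one x)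

theorem sup_mul_sup_le (a b c : A) : (a ⊔ b) * (a ⊔ c) ≤ a ⊔ b * c := by
  rw [sup_mul, mul_sup, mul_sup]
  exact sup_le (sup_le (le_sup_of_le_left (mul_le_left a a)) (le_sup_of_le_left (mul_le_left a c)))
    (sup_le (le_sup_of_le_left (mul_le_right b a)) le_sup_right)

theorem sup_pow_le (a b : A) (n : ℕ) : (a ⊔ b) ^ n ≤ a ⊔ b ^ n := by
  induction n with
  | zero => simp [sup_one]
  | succ n ih =>
    calc (a ⊔ b) ^ (n + 1) ≤ (a ⊔ b ^ n) * (a ⊔ b) := by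
          rw [pow_succ]; exact mul_le_mul_left ih _
      _ ≤ a ⊔ b ^ (n + 1) := by rw [pow_succ]; exact sup_mul_sup_le a _ b

theorem sup_pow_mul_le (x y : A) (n m : ℕ) : (x ⊔ y) ^ (n * m) ≤ x ^ n ⊔ y ^ m :=
  calc (x ⊔ y) ^ (n * m) = ((y ⊔ x) ^ n) ^ m := by rw [sup_comm, pow_mul]
    _ ≤ (y ⊔ x ^ n) ^ m := pow_le_pow_left' (sup_pow_le y x n) m
    _ ≤ x ^ n ⊔ y ^ m := by rw [sup_comm]; exact sup_pow_le _ y m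

end ResLattice

open ResLattice

theorem mem_rperp_iff {a x : A} : a ∈ rperp x ↔ a ⊔ x = 1 := by
  simp [rperp, Coann]

theorem mem_coann_rperp_self (x : A) : x ∈ Coann (rperp x) :=
  fun _ ha => by rw [sup_comm]; exact mem_rperp_iff.mp ha

theorem coann_singleton_one : Coann {(1 : A)} = Set.univ := by
  ext a
  simp [Coann, sup_one]

theorem sup_eq_one_of_coann_rperp_eq {x y : A} (h : Coann (rperp x) = rperp y) : x ⊔ y = 1 :=
  mem_rperp_iff.mp (h ▸ mem_coann_rperp_self x)

/-- The product `x * y` is dense, since any `t` in its coannulet lies in both `x^⊥` and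
`y^⊥ = x^⊥⊥`. -/
theorem rperp_mul_eq_of_coann_rperp_eq {x y : A} (h : Coann (rperp x) = rperp y) :
    rperp (x * y) = {1} := by
  ext t
  simp only [mem_rperp_iff, Set.mem_singleton_iff]
  refine ⟨fun ht => ?_, by rintro rfl; rw [sup_comm, sup_one]⟩
  have hx : t ∈ rperp x := mem_rperp_iff.mpr <| le_one _ |>.antisymm <|
    ht ▸ sup_le_sup_left (mul_le_left x y) t
  have hy : t ∈ Coann (rperp x) := h ▸ mem_rperp_iff.mpr (le_one _ |>.antisymm <|
    ht ▸ sup_le_sup_left (mul_le_right x y) t)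
  simpa using hy t hx

namespace IsRLFilter

variable {F : Set A}

theorem one_mem (hF : IsRLFilter F) : (1 : A) ∈ F := by
  obtain ⟨x, hx⟩ := hF.1
  simpa [sup_one] using hF.2.2 x hx 1

theorem mul_mem (hF : IsRLFilter F) {x y : A} (hx : x ∈ F) (hy : y ∈ F) : x * y ∈ F :=
  hF.2.1 x hx y hy

theorem mem_of_le (hF : IsRLFilter F) {x y : A} (hx : x ∈ F) (h : x ≤ y) : y ∈ F := by
  simpa [sup_eq_right.mpr h] using hF.2.2 x hx y

theorem pow_mem (hF : IsRLFilter F) {x : A} (hx : x ∈ F) (n : ℕ) : x ^ n ∈ F := by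
  induction n with
  | zero => simpa using hF.one_mem
  | succ n ih => rw [pow_succ]; exact hF.mul_mem ih hx

end IsRLFilter

theorem isRLFilter_singleton_one : IsRLFilter ({1} : Set A) :=
  ⟨Set.singleton_nonempty 1, by simp, by simpa using le_one⟩

theorem isRLFilter_sUnion {c : Set (Set A)} (hc : ∀ F ∈ c, IsRLFilter F)
    (hchain : IsChain (· ⊆ ·) c) (hne : c.Nonempty) : IsRLFilter (⋃₀ c) := by
  refine ⟨?_, ?_, ?_⟩
  · obtain ⟨F, hF⟩ := hne
    obtain ⟨x, hx⟩ := (hc F hF).1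
    exact ⟨x, F, hF, hx⟩
  · rintro x ⟨F, hF, hx⟩ y ⟨G, hG, hy⟩
    rcases hchain.total hF hG with h | h
    · exact ⟨G, hG, (hc G hG).mul_mem (h hx) hy⟩
    · exact ⟨F, hF, (hc F hF).mul_mem hx (h hy)⟩
  · rintro x ⟨F, hF, hx⟩ y
    exact ⟨F, hF, (hc F hF).2.2 x hx y⟩

def filterAdjoin (M : Set A) (a : A) : Set A := {z | ∃ q ∈ M, ∃ n : ℕ, q * a ^ n ≤ z}

theorem subset_filterAdjoin (M : Set A) (a : A) : M ⊆ filterAdjoin M a :=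
  fun q hq => ⟨q, hq, 0, by simp⟩

theorem mem_filterAdjoin_self {M : Set A} (hM : IsRLFilter M) (a : A) : a ∈ filterAdjoin M a :=
  ⟨1, hM.one_mem, 1, by simp⟩

theorem isRLFilter_filterAdjoin {M : Set A} (hM : IsRLFilter M) (a : A) :
    IsRLFilter (filterAdjoin M a) := by
  refine ⟨⟨a, mem_filterAdjoin_self hM a⟩, ?_, ?_⟩
  · rintro x ⟨q, hq, n, hn⟩ y ⟨r, hr, m, hm⟩
    refine ⟨q * r, hM.mul_mem hq hr, n + m, ?_⟩
    rw [pow_add, mul_mul_mul_comm]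
    exact mul_le_mul' hn hm
  · rintro x ⟨q, hq, n, hn⟩ y
    exact ⟨q, hq, n, le_sup_of_le_left hn⟩

/-- A filter maximal among those disjoint from a nonempty `⊔`-closed set `S` is prime: if
`x ⊔ y ∈ M` with `x, y ∉ M`, then `M` adjoined with `x` and with `y` meet `S` in some `s` and
`t`, and `(x ⊔ y) ^ (n * m) ≤ x ^ n ⊔ y ^ m` puts `s ⊔ t ∈ S` into `M`. -/
theorem isRLPrime_of_maximal_disjoint {S M : Set A} (hS : ∀ s ∈ S, ∀ t ∈ S, s ⊔ t ∈ S)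
    (hSne : S.Nonempty) (hM : Maximal (fun Q => IsRLFilter Q ∧ Disjoint Q S) M) :
    IsRLPrime M := by
  obtain ⟨⟨hMF, hMS⟩, hmax⟩ := hM
  have meets : ∀ z ∉ M, ∃ q ∈ M, ∃ n : ℕ, ∃ s ∈ S, q * z ^ n ≤ s := by
    intro z hz
    by_contra! h
    refine hz (hmax ⟨isRLFilter_filterAdjoin hMF z, ?_⟩ (subset_filterAdjoin M z)
      (mem_filterAdjoin_self hMF z))
    exact Set.disjoint_left.mpr fun s ⟨q, hq, n, hs⟩ hsS => h q hq n s hsS hs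
  refine ⟨hMF, fun h => ?_, fun x y hxy => ?_⟩
  · obtain ⟨s, hs⟩ := hSne
    exact Set.disjoint_left.mp hMS (h ▸ Set.mem_univ s) hs
  by_contra! hxy'
  obtain ⟨q, hq, n, s, hs, hqs⟩ := meets x hxy'.1
  obtain ⟨r, hr, m, t, ht, hrt⟩ := meets y hxy'.2
  have hle : q * r * (x ⊔ y) ^ (n * m) ≤ s ⊔ t :=
    calc q * r * (x ⊔ y) ^ (n * m) ≤ q * r * (x ^ n ⊔ y ^ m) :=
          mul_le_mul_right (sup_pow_mul_le x y n m) _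
      _ = (q * r) * x ^ n ⊔ (q * r) * y ^ m := mul_sup _ _ _
      _ ≤ q * x ^ n ⊔ r * y ^ m := sup_le_sup (mul_le_mul_left (mul_le_left q r) _)
          (mul_le_mul_left (mul_le_right q r) _)
      _ ≤ s ⊔ t := sup_le_sup hqs hrt
  exact Set.disjoint_left.mp hMS
    (hMF.mem_of_le (hMF.mul_mem (hMF.mul_mem hq hr) (hMF.pow_mem hxy _)) hle) (hS s hs t ht)

theorem exists_isRLPrime_disjoint {F S : Set A} (hF : IsRLFilter F)
    (hS : ∀ s ∈ S, ∀ t ∈ S, s ⊔ t ∈ S) (hSne : S.Nonempty) (hFS : Disjoint F S) :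
    ∃ Q, IsRLPrime Q ∧ F ⊆ Q ∧ Disjoint Q S := by
  obtain ⟨M, hFM, hM⟩ := zorn_subset_nonempty {Q | IsRLFilter Q ∧ Disjoint Q S}
    (fun c hc hchain hne => ⟨⋃₀ c, ⟨isRLFilter_sUnion (fun G hG => (hc hG).1) hchain hne,
      Set.disjoint_sUnion_left.mpr fun G hG => (hc hG).2⟩, fun _ => Set.subset_sUnion_of_mem⟩)
    F ⟨hF, hFS⟩
  exact ⟨M, isRLPrime_of_maximal_disjoint hS hSne hM, hFM, hM.1.2⟩

theorem IsRLPrime.mem_or_mem_of_sup_eq_one {P : Set A} (hP : IsRLPrime P) {x y : A}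
    (h : x ⊔ y = 1) : x ∈ P ∨ y ∈ P :=
  hP.2.2 x y (h ▸ hP.1.one_mem)

theorem notMem_of_coann_rperp_eq {P : Set A} (hP : IsRLFilter P)
    (hnd : ¬ ∃ d ∈ P, rperp d = {1}) {x y : A} (h : Coann (rperp x) = rperp y) (hx : x ∈ P) :
    y ∉ P :=
  fun hy => hnd ⟨x * y, hP.mul_mem hx hy, rperp_mul_eq_of_coann_rperp_eq h⟩

theorem IsAlphaFilter.not_exists_dense {P : Set A} (hα : IsAlphaFilter P) (hP : P ≠ Set.univ) :
    ¬ ∃ d ∈ P, rperp d = {1} := by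
  rintro ⟨d, hd, hdense⟩
  have := hα.2 d hd
  rw [hdense, coann_singleton_one] at this
  exact hP (Set.univ_subset_iff.mp this)

theorem isAlphaFilter_of_not_exists_dense (hq : Quasicomplemented A) {P : Set A}
    (hP : IsRLPrime P) (hnd : ¬ ∃ d ∈ P, rperp d = {1}) : IsAlphaFilter P := by
  refine ⟨hP.1, fun x hx a ha => ?_⟩
  obtain ⟨y, hy⟩ := hq x
  exact (hP.mem_or_mem_of_sup_eq_one (mem_rperp_iff.mp (hy ▸ ha))).resolve_right
    (notMem_of_coann_rperp_eq hP.1 hnd hy hx)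

theorem isRLMinPrime_of_not_exists_dense (hq : Quasicomplemented A) {P : Set A}
    (hP : IsRLPrime P) (hnd : ¬ ∃ d ∈ P, rperp d = {1}) : IsRLMinPrime P := by
  refine ⟨hP, fun Q hQ hQP => hQP.antisymm fun x hx => ?_⟩
  obtain ⟨y, hy⟩ := hq x
  exact (hQ.mem_or_mem_of_sup_eq_one (sup_eq_one_of_coann_rperp_eq hy)).resolve_right
    fun hyQ => notMem_of_coann_rperp_eq hP.1 hnd hy hx (hQP hyQ)

/-- For a dense `d ∈ P`, a prime filter avoiding the `⊔`-closed set `{a ⊔ d | a ∉ P}` lies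
inside `P` but misses `d`. -/
theorem IsRLMinPrime.not_exists_dense {P : Set A} (hP : IsRLMinPrime P) :
    ¬ ∃ d ∈ P, rperp d = {1} := by
  rintro ⟨d, hd, hdense⟩
  obtain ⟨a, ha⟩ : ∃ a, a ∉ P := by simpa [Set.eq_univ_iff_forall] using hP.1.2.1
  set S := (· ⊔ d) '' Pᶜ
  have hS : ∀ s ∈ S, ∀ t ∈ S, s ⊔ t ∈ S := by
    rintro _ ⟨b, hb, rfl⟩ _ ⟨c, hc, rfl⟩
    refine ⟨b ⊔ c, fun hbc => (hP.1.2.2 b c hbc).elim hb hc, ?_⟩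
    rw [sup_sup_sup_comm, sup_idem]
  have hone : Disjoint {1} S := by
    rw [Set.disjoint_singleton_left]
    rintro ⟨b, hb, hbd⟩
    have : b ∈ rperp d := mem_rperp_iff.mpr hbd
    rw [hdense, Set.mem_singleton_iff] at this
    exact hb (this ▸ hP.1.1.one_mem)
  obtain ⟨Q, hQ, -, hQS⟩ := exists_isRLPrime_disjoint isRLFilter_singleton_one hS
    ⟨a ⊔ d, a, ha, rfl⟩ hone
  have hQP : Q ⊆ P := fun x hx => by
    by_contra hxP
    exact Set.disjoint_left.mp hQS (hQ.1.2.2 x hx d) ⟨x, hxP, rfl⟩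
  have hQeq : Q = P := hP.2 Q hQ hQP
  exact Set.disjoint_left.mp hQS (hQeq ▸ hP.1.1.mem_of_le hd le_sup_right) ⟨a, ha, rfl⟩

theorem IsRLMinPrime.mem_iff_notMem_of_coann_rperp_eq {P : Set A} (hP : IsRLMinPrime P)
    {x y : A} (h : Coann (rperp x) = rperp y) : x ∈ P ↔ y ∉ P :=
  ⟨notMem_of_coann_rperp_eq hP.1.1 hP.not_exists_dense h,
    (hP.1.mem_or_mem_of_sup_eq_one (sup_eq_one_of_coann_rperp_eq h)).resolve_right⟩

theorem stmt19 (hq : Quasicomplemented A) (P : Set A) (hP : IsRLPrime P) :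
    (IsAlphaFilter P ↔ ¬ ∃ d ∈ P, rperp d = {1}) ∧
    ((¬ ∃ d ∈ P, rperp d = {1}) ↔ IsRLMinPrime P) ∧
    (IsRLMinPrime P ↔ ∀ x y : A, Coann (rperp x) = rperp y → (x ∈ P ↔ y ∉ P)) := by
  have not_exists_dense : (∀ x y : A, Coann (rperp x) = rperp y → (x ∈ P ↔ y ∉ P)) →
      ¬ ∃ d ∈ P, rperp d = {1} := by
    rintro h ⟨d, hd, hdense⟩
    exact (h d 1 (by rw [hdense]; rfl)).mp hd hP.1.one_mem
  exact ⟨⟨fun hα => hα.not_exists_dense hP.2.1, isAlphaFilter_of_not_exists_dense hq hP⟩,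
    ⟨isRLMinPrime_of_not_exists_dense hq hP, IsRLMinPrime.not_exists_dense⟩,
    ⟨fun hmin _ _ => hmin.mem_iff_notMem_of_coann_rperp_eq,
      fun h => isRLMinPrime_of_not_exists_dense hq hP (not_exists_dense h)⟩⟩
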